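/- arXiv:math/9310204 — 2 statements merged into one kernel-verified Lean document; each statement's English description precedes it below -/
import Mathlib

section
/- Let G be a group with a fixed finite generating set and H ≤ G a subgroup. Let γ_{G/H}(i) = Γ_{G/H}(i) − Γ_{G/H}(i−1) be the number of cosets whose minimal-length representative has length exactly i, and let Γ_H^{(G)}(n) be the number of elements of H of word length ≤ n (length measured in the generators of G). Then for all n: Σ_{i=0}^{n} γ_{G/H}(i) · Γ_H^{(G)}(n−i) ≤ Γ_G(n) ≤ Σ_{i=0}^{n} γ_{G/H}(i) · Γ_H^{(G)}(n+i). -/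
/-- The ball of radius `n` in `G` with respect to the generating set `S`
(words of length at most `n` in `S ∪ S⁻¹`). -/
def wordBall {G : Type*} [Group G] (S : Set G) (n : ℕ) : Set G :=
  {g | ∃ l : List G, l.length ≤ n ∧ (∀ x ∈ l, x ∈ S ∨ x⁻¹ ∈ S) ∧ l.prod = g}

/-- The word length of `g` with respect to the generating set `S`. -/
noncomputable def wordLength {G : Type*} [Group G] (S : Set G) (g : G) : ℕ :=
  sInf {n | g ∈ wordBall S n}

/-- The growth function of `G` with respect to `S`. -/
noncomputable def growth {G : Type*} [Group G] (S : Set G) (n : ℕ) : ℕ :=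
  (wordBall S n).ncard

/-- The cogrowth function of a subgroup `H ≤ G`: the number of right cosets `Hg`
containing an element of word length at most `n`. -/
noncomputable def cogrowth {G : Type*} [Group G] (S : Set G) (H : Subgroup G) (n : ℕ) : ℕ :=
  ((fun g => Quotient.mk (QuotientGroup.rightRel H) g) '' wordBall S n).ncard

/-- A subgroup is essential if it intersects every nontrivial subgroup nontrivially. -/
def Essential {G : Type*} [Group G] (H : Subgroup G) : Prop :=
  ∀ K : Subgroup G, K ≠ ⊥ → H ⊓ K ≠ ⊥

/-- The number of cosets of `H` whose minimal-length representative has length exactly `i`. -/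
noncomputable def cogrowthSphere {G : Type*} [Group G] (S : Set G) (H : Subgroup G) : ℕ → ℕ
  | 0 => cogrowth S H 0
  | (i + 1) => cogrowth S H (i + 1) - cogrowth S H i

/-- The number of elements of the subgroup `H` of word length at most `n`
(length measured in the generators of `G`). -/
noncomputable def subgroupGrowth {G : Type*} [Group G] (S : Set G) (H : Subgroup G) (n : ℕ) : ℕ :=
  ((H : Set G) ∩ wordBall S n).ncard

section Aux
variable {G : Type*} [Group G] (S : Set G)

theorem wordBall_mono {m n : ℕ} (h : m ≤ n) : wordBall S m ⊆ wordBall S n :=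
  fun _ ⟨l, hl, hx, hp⟩ => ⟨l, hl.trans h, hx, hp⟩

theorem wordBall_mul {a b : ℕ} {g g' : G} (hg : g ∈ wordBall S a) (hg' : g' ∈ wordBall S b) :
    g * g' ∈ wordBall S (a + b) := by
  obtain ⟨l, hl, hx, rfl⟩ := hg
  obtain ⟨l', hl', hx', rfl⟩ := hg'
  refine ⟨l ++ l', by simpa using Nat.add_le_add hl hl', ?_, by simp⟩
  intro x hx''
  rcases List.mem_append.1 hx'' with h | h
  · exact hx x h
  · exact hx' x h

theorem wordBall_inv {a : ℕ} {g : G} (hg : g ∈ wordBall S a) : g⁻¹ ∈ wordBall S a := by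
  obtain ⟨l, hl, hx, rfl⟩ := hg
  refine ⟨(l.map (·⁻¹)).reverse, by simpa using hl, ?_, (List.prod_inv_reverse l).symm⟩
  intro x hx'
  simp only [List.mem_reverse, List.mem_map] at hx'
  obtain ⟨y, hy, rfl⟩ := hx'
  rcases hx y hy with h | h
  · exact Or.inr (by simpa using h)
  · exact Or.inl h

theorem wordBall_finite (hS : S.Finite) (n : ℕ) : (wordBall S n).Finite := by
  induction n with
  | zero =>
      refine Set.Finite.subset (Set.finite_singleton 1) ?_
      rintro g ⟨l, hl, -, rfl⟩
      simp [Nat.le_zero.1 hl, List.length_eq_zero_iff.1 (Nat.le_zero.1 hl)]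
  | succ n ih =>
      have h1 : (wordBall S 1).Finite := by
        refine Set.Finite.subset (((hS.union hS.inv).insert 1)) ?_
        rintro g ⟨l, hl, hx, rfl⟩
        match l, hl with
        | [], _ => simp
        | [x], _ =>
            rcases hx x (by simp) with h | h
            · simp [Set.mem_insert_iff, h]
            · simp only [List.prod_cons, List.prod_nil, mul_one]
              exact Or.inr (Or.inr (by simpa [Set.mem_inv] using h))
      refine Set.Finite.subset (h1.mul ih) ?_
      rintro g ⟨l, hl, hx, rfl⟩
      match l, hl with
      | [], _ =>
          have h1m : (1:G) ∈ wordBall S 1 := ⟨[], by simp⟩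
          have hnm : (1:G) ∈ wordBall S n := ⟨[], by simp⟩
          simpa using Set.mul_mem_mul h1m hnm
      | x :: t, hl =>
          have h1m : x ∈ wordBall S 1 := ⟨[x], by simp, by simpa using hx x (by simp), by simp⟩
          have hnm : t.prod ∈ wordBall S n := ⟨t, by simpa using hl, fun y hy => hx y (by simp [hy]), rfl⟩
          simpa using Set.mul_mem_mul h1m hnm

end Aux

section Coset

open scoped Classical
variable {G : Type*} [Group G] (S : Set G) (H : Subgroup G)

def cosetImg (m : ℕ) : Set (Quotient (QuotientGroup.rightRel H)) :=
  (fun g => Quotient.mk (QuotientGroup.rightRel H) g) '' wordBall S m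

theorem cosetImg_mono {j i : ℕ} (h : j ≤ i) : cosetImg S H j ⊆ cosetImg S H i :=
  Set.image_mono (wordBall_mono S h)

theorem cosetImg_finite (hS : S.Finite) (m : ℕ) : (cosetImg S H m).Finite :=
  (wordBall_finite S hS m).image _

theorem quot_eq_iff (a b : G) :
    Quotient.mk (QuotientGroup.rightRel H) a = Quotient.mk (QuotientGroup.rightRel H) b ↔
      b * a⁻¹ ∈ H := by
  rw [Quotient.eq]
  exact QuotientGroup.rightRel_apply

noncomputable def cosetIdx (q : Quotient (QuotientGroup.rightRel H)) : ℕ :=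
  sInf {i | q ∈ cosetImg S H i}

noncomputable def cosetRep (q : Quotient (QuotientGroup.rightRel H)) : G :=
  if h : ∃ g ∈ wordBall S (cosetIdx S H q),
      Quotient.mk (QuotientGroup.rightRel H) g = q then h.choose else 1

theorem cosetIdx_spec {q : Quotient (QuotientGroup.rightRel H)} {m : ℕ}
    (hq : q ∈ cosetImg S H m) :
    cosetIdx S H q ≤ m ∧ q ∈ cosetImg S H (cosetIdx S H q) ∧
      ∀ j < cosetIdx S H q, q ∉ cosetImg S H j := by
  refine ⟨Nat.sInf_le hq, ?_, fun j hj hmem => ?_⟩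
  · have h := Nat.sInf_mem (⟨m, hq⟩ : Set.Nonempty {i | q ∈ cosetImg S H i})
    exact h
  · have h : cosetIdx S H q ≤ j := Nat.sInf_le hmem
    omega

theorem cosetRep_spec {q : Quotient (QuotientGroup.rightRel H)} {m : ℕ}
    (hq : q ∈ cosetImg S H m) :
    cosetRep S H q ∈ wordBall S (cosetIdx S H q) ∧
      Quotient.mk (QuotientGroup.rightRel H) (cosetRep S H q) = q := by
  have hex : ∃ g ∈ wordBall S (cosetIdx S H q),
      Quotient.mk (QuotientGroup.rightRel H) g = q := by
    obtain ⟨g, hg, hgq⟩ := (cosetIdx_spec S H hq).2.1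
    exact ⟨g, hg, hgq⟩
  rw [cosetRep, dif_pos hex]
  exact hex.choose_spec

noncomputable def cosetD (hS : S.Finite) : ℕ → Finset (Quotient (QuotientGroup.rightRel H))
  | 0 => (cosetImg_finite S H hS 0).toFinset
  | (i+1) => (cosetImg_finite S H hS (i+1)).toFinset \ (cosetImg_finite S H hS i).toFinset

theorem mem_cosetD {hS : S.Finite} {i : ℕ} {q : Quotient (QuotientGroup.rightRel H)} :
    q ∈ cosetD S H hS i ↔ q ∈ cosetImg S H i ∧ ∀ j < i, q ∉ cosetImg S H j := by
  cases i with
  | zero => simp [cosetD]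
  | succ i =>
      simp only [cosetD, Finset.mem_sdiff, Set.Finite.mem_toFinset]
      constructor
      · rintro ⟨h1, h2⟩
        exact ⟨h1, fun j hj hc => h2 (cosetImg_mono S H (by omega) hc)⟩
      · rintro ⟨h1, h2⟩
        exact ⟨h1, h2 i (Nat.lt_succ_self i)⟩

theorem cosetIdx_of_mem_cosetD {hS : S.Finite} {i : ℕ} {q} (hq : q ∈ cosetD S H hS i) :
    cosetIdx S H q = i := by
  rw [mem_cosetD] at hq
  have h1 := cosetIdx_spec S H hq.1
  have h2 : ¬ cosetIdx S H q < i := fun hlt => hq.2 _ hlt h1.2.1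
  omega

theorem mem_cosetD_of_mem {hS : S.Finite} {m : ℕ} {q} (hq : q ∈ cosetImg S H m) :
    q ∈ cosetD S H hS (cosetIdx S H q) := by
  rw [mem_cosetD]
  exact ⟨(cosetIdx_spec S H hq).2.1, (cosetIdx_spec S H hq).2.2⟩

theorem cogrowth_eq_card (hS : S.Finite) (m : ℕ) :
    cogrowth S H m = ((cosetImg_finite S H hS m).toFinset).card :=
  Set.ncard_eq_toFinset_card _ _

theorem cosetD_card (hS : S.Finite) (i : ℕ) :
    (cosetD S H hS i).card = cogrowthSphere S H i := by
  cases i with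
  | zero =>
      rw [cosetD, cogrowthSphere, cogrowth_eq_card S H hS]
  | succ i =>
      rw [cosetD, cogrowthSphere, cogrowth_eq_card S H hS, cogrowth_eq_card S H hS,
        Finset.card_sdiff_of_subset]
      exact Set.Finite.toFinset_subset_toFinset.2 (cosetImg_mono S H (Nat.le_succ i))

theorem growth_lower (hS : S.Finite) (n : ℕ) :
    (∑ i ∈ Finset.range (n + 1), cogrowthSphere S H i * subgroupGrowth S H (n - i))
      ≤ growth S n := by
  classical
  have hfin := wordBall_finite S hS
  have hHfin : ∀ m : ℕ, ((H : Set G) ∩ wordBall S m).Finite :=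
    fun m => (hfin m).subset Set.inter_subset_right
  set U : Finset G := (Finset.range (n+1)).biUnion (fun i => (cosetD S H hS i).biUnion
      (fun q => (hHfin (n-i)).toFinset.image (fun h => h * cosetRep S H q))) with hU
  have hπ : ∀ (i : ℕ) (q : Quotient (QuotientGroup.rightRel H)), q ∈ cosetD S H hS i →
      ∀ m : ℕ, ∀ x ∈ (hHfin m).toFinset.image (fun h => h * cosetRep S H q),
        Quotient.mk (QuotientGroup.rightRel H) x = q := by
    intro i q hq m x hx
    simp only [Finset.mem_image, Set.Finite.mem_toFinset, Set.mem_inter_iff] at hx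
    obtain ⟨h, ⟨hH, -⟩, rfl⟩ := hx
    have hrep := (cosetRep_spec S H ((mem_cosetD S H).1 hq).1).2
    conv_rhs => rw [← hrep]
    rw [quot_eq_iff H]
    simpa [mul_inv_rev, mul_assoc] using H.inv_mem hH
  have hsub : U ⊆ (hfin n).toFinset := by
    intro x hx
    rw [hU] at hx
    simp only [Finset.mem_biUnion, Finset.mem_range] at hx
    obtain ⟨i, hi, q, hq, hx⟩ := hx
    simp only [Finset.mem_image, Set.Finite.mem_toFinset, Set.mem_inter_iff] at hx
    obtain ⟨h, ⟨hH, hball⟩, rfl⟩ := hx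
    have hrep := (cosetRep_spec S H ((mem_cosetD S H).1 hq).1).1
    rw [cosetIdx_of_mem_cosetD S H hq] at hrep
    have hmul := wordBall_mul S hball hrep
    rw [Set.Finite.mem_toFinset]
    have hni : n - i + i = n := Nat.sub_add_cancel (by omega)
    rwa [hni] at hmul
  have hdisj2 : ∀ i : ℕ, ∀ q ∈ cosetD S H hS i, ∀ q' ∈ cosetD S H hS i, q ≠ q' →
      Disjoint ((hHfin (n-i)).toFinset.image (fun h => h * cosetRep S H q))
        ((hHfin (n-i)).toFinset.image (fun h => h * cosetRep S H q')) := by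
    intro i q hq q' hq' hne
    rw [Finset.disjoint_left]
    intro x hx hx'
    exact hne ((hπ i q hq _ x hx).symm.trans (hπ i q' hq' _ x hx'))
  have hcard : U.card
      = ∑ i ∈ Finset.range (n+1), cogrowthSphere S H i * subgroupGrowth S H (n - i) := by
    rw [hU, Finset.card_biUnion]
    · refine Finset.sum_congr rfl (fun i hi => ?_)
      rw [Finset.card_biUnion (fun q hq q' hq' hne => hdisj2 i q hq q' hq' hne)]
      have hconst : ∀ q ∈ cosetD S H hS i,
          ((hHfin (n-i)).toFinset.image (fun h => h * cosetRep S H q)).card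
            = subgroupGrowth S H (n - i) := by
        intro q hq
        rw [Finset.card_image_of_injective _ (mul_left_injective (cosetRep S H q))]
        exact (Set.ncard_eq_toFinset_card _ _).symm
      rw [Finset.sum_congr rfl hconst, Finset.sum_const, smul_eq_mul, cosetD_card]
    · intro i hi j hj hne
      rw [Function.onFun, Finset.disjoint_left]
      intro x hx hx'
      simp only [Finset.mem_biUnion] at hx hx'
      obtain ⟨q, hq, hxq⟩ := hx
      obtain ⟨q', hq', hxq'⟩ := hx'
      have e : q = q' := (hπ i q hq _ x hxq).symm.trans (hπ j q' hq' _ x hxq')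
      subst e
      exact hne ((cosetIdx_of_mem_cosetD S H hq).symm.trans (cosetIdx_of_mem_cosetD S H hq'))
  have hle := Finset.card_le_card hsub
  rw [hcard] at hle
  have hg : growth S n = (hfin n).toFinset.card := Set.ncard_eq_toFinset_card _ _
  omega

theorem growth_upper (hS : S.Finite) (n : ℕ) :
    growth S n ≤
      ∑ i ∈ Finset.range (n + 1), cogrowthSphere S H i * subgroupGrowth S H (n + i) := by
  classical
  have hfin := wordBall_finite S hS
  have hHfin : ∀ m : ℕ, ((H : Set G) ∩ wordBall S m).Finite :=
    fun m => (hfin m).subset Set.inter_subset_right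
  set V : Finset G := (Finset.range (n+1)).biUnion (fun i => (cosetD S H hS i).biUnion
      (fun q => (hHfin (n+i)).toFinset.image (fun h => h * cosetRep S H q))) with hV
  have hsub : (hfin n).toFinset ⊆ V := by
    intro g hg
    rw [Set.Finite.mem_toFinset] at hg
    have hqm : Quotient.mk (QuotientGroup.rightRel H) g ∈ cosetImg S H n := ⟨g, hg, rfl⟩
    have hidx := cosetIdx_spec S H hqm
    have hrep := cosetRep_spec S H hqm
    set q := Quotient.mk (QuotientGroup.rightRel H) g with hqdef
    rw [hV]
    refine Finset.mem_biUnion.2 ⟨cosetIdx S H q, Finset.mem_range.2 (by omega),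
      Finset.mem_biUnion.2 ⟨q, mem_cosetD_of_mem S H hqm,
        Finset.mem_image.2 ⟨g * (cosetRep S H q)⁻¹, ?_, by simp⟩⟩⟩
    rw [Set.Finite.mem_toFinset]
    constructor
    · exact (quot_eq_iff H (cosetRep S H q) g).1 (hrep.2.trans hqdef)
    · exact wordBall_mul S hg (wordBall_inv S hrep.1)
  have h1 : growth S n = (hfin n).toFinset.card := Set.ncard_eq_toFinset_card _ _
  have h2 := Finset.card_le_card hsub
  have h3 : V.card ≤ ∑ i ∈ Finset.range (n+1),
      cogrowthSphere S H i * subgroupGrowth S H (n + i) := by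
    rw [hV]
    refine Finset.card_biUnion_le.trans (Finset.sum_le_sum fun i hi => ?_)
    refine Finset.card_biUnion_le.trans ?_
    have hb : ∀ q ∈ cosetD S H hS i,
        ((hHfin (n+i)).toFinset.image (fun h => h * cosetRep S H q)).card
          ≤ subgroupGrowth S H (n + i) := by
      intro q hq
      refine Finset.card_image_le.trans ?_
      exact le_of_eq (Set.ncard_eq_toFinset_card _ _).symm
    refine (Finset.sum_le_sum hb).trans ?_
    rw [Finset.sum_const, smul_eq_mul, cosetD_card]
  omega

end Coset

/-- The growth of `G` is sandwiched between convolutions of the cogrowth spheres of `H`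
with the growth of `H`. -/
theorem growth_sandwich {G : Type*} [Group G] (S : Set G) (hS : S.Finite)
    (hgen : Subgroup.closure S = ⊤) (H : Subgroup G) (n : ℕ) :
    (∑ i ∈ Finset.range (n + 1), cogrowthSphere S H i * subgroupGrowth S H (n - i))
      ≤ growth S n ∧
    growth S n ≤
      ∑ i ∈ Finset.range (n + 1), cogrowthSphere S H i * subgroupGrowth S H (n + i) := by
  exact ⟨growth_lower S H hS n, growth_upper S H hS n⟩
end

section
/- Let R be a finitely generated associative unital K-algebra without zero divisors and I a nonzero right ideal of R. If the cogrowth satisfies Γ_{R/I}(n) ≺ Γ_R(n) (i.e., Γ_{R/I} ≼ Γ_R but they are not equivalent), then I is an essential right ideal: I intersects every nonzero right ideal of R nontrivially. -/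
/-!
If `I ⊓ J = 0` with `J ≠ 0`, pick `0 ≠ b ∈ J ∩ R^{(c)}`. Since `R` has no zero divisors,
left multiplication by `b` embeds `R^{(n)}` into `J ∩ R^{(c + n)}`, a subspace meeting `I`
trivially, so `Γ_R(n) + Γ_I(c + n) ≤ Γ_R(c + n)`, i.e. `Γ_R(n) ≤ Γ_{R/I}(c + n)`. As
`b ∈ R^{(cn)}` for `n ≥ 1`, this gives `Γ_R(n) ≤ Γ_{R/I}((c + 1) n)`, so `Γ_R ≼ Γ_{R/I}`.
-/

/-- `R^{(n)}`: the span of products of at most `n` elements of the generating set `X`. -/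
def monomialSpan (K : Type*) {R : Type*} [Field K] [Ring R] [Algebra K R]
    (X : Set R) (n : ℕ) : Submodule K R :=
  Submodule.span K {r | ∃ l : List R, l.length ≤ n ∧ (∀ x ∈ l, x ∈ X) ∧ l.prod = r}

/-- The growth function of the algebra `R`: `Γ_R(n) = dim R^{(n)}`. -/
noncomputable def algGrowth (K : Type*) {R : Type*} [Field K] [Ring R] [Algebra K R]
    (X : Set R) (n : ℕ) : ℕ :=
  Module.finrank K ↥(monomialSpan K X n)

/-- The growth function of a right ideal (or subspace) `I`: `Γ_I(n) = dim (I ∩ R^{(n)})`. -/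
noncomputable def idealGrowth (K : Type*) {R : Type*} [Field K] [Ring R] [Algebra K R]
    (X : Set R) (I : Submodule K R) (n : ℕ) : ℕ :=
  Module.finrank K ↥(I ⊓ monomialSpan K X n)

/-- The cogrowth function of `I`: `Γ_{R/I}(n) = dim R^{(n)} - dim (I ∩ R^{(n)})`. -/
noncomputable def idealCogrowth (K : Type*) {R : Type*} [Field K] [Ring R] [Algebra K R]
    (X : Set R) (I : Submodule K R) (n : ℕ) : ℕ :=
  algGrowth K X n - idealGrowth K X I n

/-- A `K`-subspace of `R` which is a right ideal. -/
def IsRightIdeal (K : Type*) {R : Type*} [Field K] [Ring R] [Algebra K R]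
    (I : Submodule K R) : Prop :=
  ∀ a ∈ I, ∀ r : R, a * r ∈ I

/-- The preorder on growth functions: `f ≼ g` iff `f(n) ≤ g(Cn)` for some `C`. -/
def GrowthLE (f g : ℕ → ℕ) : Prop := ∃ C : ℕ, 0 < C ∧ ∀ n, f n ≤ g (C * n)

theorem Submodule.finrank_add_finrank_le_of_disjoint_of_le {K V : Type*} [DivisionRing K]
    [AddCommGroup V] [Module K V] {P Q W : Submodule K V} [FiniteDimensional K W]
    (hP : P ≤ W) (hQ : Q ≤ W) (hPQ : Disjoint P Q) :
    Module.finrank K P + Module.finrank K Q ≤ Module.finrank K W := by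
  have := Submodule.finiteDimensional_of_le hP
  have := Submodule.finiteDimensional_of_le hQ
  rw [← Submodule.finrank_sup_add_finrank_inf_eq, hPQ.eq_bot, finrank_bot, add_zero]
  exact Submodule.finrank_mono (sup_le hP hQ)

section MonomialSpan

variable {K R : Type*} [Field K] [Ring R] [Algebra K R] {X : Set R}

theorem monomialSpan_mono {m n : ℕ} (h : m ≤ n) : monomialSpan K X m ≤ monomialSpan K X n :=
  Submodule.span_mono fun _ ⟨l, hl, hX, hprod⟩ ↦ ⟨l, hl.trans h, hX, hprod⟩

theorem monomialSpan_zero : monomialSpan K X 0 = K ∙ (1 : R) := by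
  refine congrArg _ (Set.ext fun r ↦ ⟨?_, ?_⟩)
  · rintro ⟨l, hl, -, rfl⟩
    simp [List.eq_nil_of_length_eq_zero (Nat.le_zero.mp hl)]
  · rintro rfl
    exact ⟨[], le_rfl, by simp, List.prod_nil⟩

theorem mul_mem_monomialSpan {m n : ℕ} {a b : R} (ha : a ∈ monomialSpan K X m)
    (hb : b ∈ monomialSpan K X n) : a * b ∈ monomialSpan K X (m + n) := by
  suffices monomialSpan K X m * monomialSpan K X n ≤ monomialSpan K X (m + n) from
    this (Submodule.mul_mem_mul ha hb)
  rw [monomialSpan, monomialSpan, Submodule.span_mul_span]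
  refine Submodule.span_mono ?_
  rintro _ ⟨_, ⟨l, hl, hlX, rfl⟩, _, ⟨l', hl', hl'X, rfl⟩, rfl⟩
  refine ⟨l ++ l', by simpa using add_le_add hl hl', ?_, List.prod_append⟩
  simpa [or_imp, forall_and] using And.intro hlX hl'X

theorem finiteDimensional_monomialSpan (hX : X.Finite) (n : ℕ) :
    FiniteDimensional K (monomialSpan K X n) := by
  have := hX.to_subtype
  refine FiniteDimensional.span_of_finite K <|
    ((List.finite_length_le X n).image fun l ↦ (l.map Subtype.val).prod).subset ?_
  rintro r ⟨l, hl, hlX, rfl⟩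
  refine ⟨l.attach.map fun x ↦ ⟨x.1, hlX x.1 x.2⟩, by simpa using hl, ?_⟩
  simp [Function.comp_def]

theorem exists_mem_monomialSpan (hgen : Algebra.adjoin K X = ⊤) (b : R) :
    ∃ c, b ∈ monomialSpan K X c := by
  have hb : b ∈ Submodule.span K (Submonoid.closure X : Set R) := by
    rw [← Algebra.adjoin_eq_span, hgen]
    trivial
  have hle : Submodule.span K (Submonoid.closure X : Set R) ≤ ⨆ n, monomialSpan K X n := by
    rw [Submodule.span_le]
    intro x hx
    obtain ⟨l, hlX, hprod⟩ := Submonoid.exists_list_of_mem_closure hx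
    exact Submodule.mem_iSup_of_mem l.length (Submodule.subset_span ⟨l, le_rfl, hlX, hprod⟩)
  have hdir : Directed (· ≤ ·) (monomialSpan K X) := fun m n ↦
    ⟨max m n, monomialSpan_mono (le_max_left m n), monomialSpan_mono (le_max_right m n)⟩
  exact (Submodule.mem_iSup_of_directed _ hdir).mp (hle hb)

end MonomialSpan

section Growth

variable {K R : Type*} [Field K] [Ring R] [Algebra K R] {X : Set R} {I J : Submodule K R}

theorem idealCogrowth_zero (h1 : (1 : R) ∉ I) : idealCogrowth K X I 0 = algGrowth K X 0 := by
  rw [idealCogrowth, idealGrowth, monomialSpan_zero,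
    (Submodule.disjoint_span_singleton_of_notMem h1).eq_bot, finrank_bot, Nat.sub_zero]

variable [NoZeroDivisors R]

theorem algGrowth_le_idealCogrowth_add (hX : X.Finite) (hJ : IsRightIdeal K J)
    (hIJ : Disjoint I J) {b : R} (hbJ : b ∈ J) (hb : b ≠ 0) {c : ℕ}
    (hbc : b ∈ monomialSpan K X c) (n : ℕ) :
    algGrowth K X n ≤ idealCogrowth K X I (c + n) := by
  have := finiteDimensional_monomialSpan (K := K) hX (c + n)
  let P := (monomialSpan K X n).map (LinearMap.mulLeft K b)
  have hPrank : Module.finrank K P = algGrowth K X n :=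
    (Submodule.equivMapOfInjective _ (mul_right_injective₀ hb) _).finrank_eq.symm
  have hPle : P ≤ monomialSpan K X (c + n) := by
    rintro _ ⟨r, hr, rfl⟩
    exact mul_mem_monomialSpan hbc hr
  have hPJ : P ≤ J := by
    rintro _ ⟨r, -, rfl⟩
    exact hJ b hbJ r
  have hsum := Submodule.finrank_add_finrank_le_of_disjoint_of_le hPle inf_le_right
    (hIJ.symm.mono hPJ inf_le_left)
  rw [hPrank] at hsum
  exact Nat.le_sub_of_add_le hsum

theorem growthLE_algGrowth_idealCogrowth (hX : X.Finite) (hgen : Algebra.adjoin K X = ⊤)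
    (hI : IsRightIdeal K I) (hJ : IsRightIdeal K J) (hJne : J ≠ ⊥) (hIJ : Disjoint I J) :
    GrowthLE (algGrowth K X) (idealCogrowth K X I) := by
  obtain ⟨b, hbJ, hb⟩ := Submodule.exists_mem_ne_zero_of_ne_bot hJne
  obtain ⟨c, hbc⟩ := exists_mem_monomialSpan hgen b
  refine ⟨c + 1, c.succ_pos, fun n ↦ ?_⟩
  rcases Nat.eq_zero_or_pos n with rfl | hn
  · -- `1 ∈ I` would force `b = 1 * b ∈ I ⊓ J`.
    have h1 : (1 : R) ∉ I := fun h1 ↦ hb (hIJ.le_bot ⟨by simpa using hI 1 h1 b, hbJ⟩)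
    rw [mul_zero, idealCogrowth_zero h1]
  · have hbcn : b ∈ monomialSpan K X (c * n) := monomialSpan_mono (Nat.le_mul_of_pos_right c hn) hbc
    simpa [add_mul] using algGrowth_le_idealCogrowth_add hX hJ hIJ hbJ hb hbcn n

end Growth

theorem essential_of_cogrowth_lt_general {K R : Type*} [Field K] [Ring R] [Algebra K R]
    [NoZeroDivisors R] (X : Finset R) (hgen : Algebra.adjoin K (X : Set R) = ⊤)
    (I : Submodule K R) (hI : IsRightIdeal K I)
    (hlt : GrowthLE (idealCogrowth K (X : Set R) I) (algGrowth K (X : Set R))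
      ∧ ¬ GrowthLE (algGrowth K (X : Set R)) (idealCogrowth K (X : Set R) I)) :
    ∀ J : Submodule K R, IsRightIdeal K J → J ≠ ⊥ → I ⊓ J ≠ ⊥ := fun _ hJ hJne hIJ ↦
  hlt.2 <| growthLE_algGrowth_idealCogrowth X.finite_toSet hgen hI hJ hJne (disjoint_iff.mpr hIJ)

/-- In an algebra without zero divisors, a nonzero right ideal whose cogrowth is
strictly smaller than the growth of `R` is essential. -/
theorem essential_of_cogrowth_lt {K R : Type*} [Field K] [Ring R] [Algebra K R]
    [NoZeroDivisors R] (X : Finset R) (hgen : Algebra.adjoin K (X : Set R) = ⊤)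
    (I : Submodule K R) (hI : IsRightIdeal K I) (hne : I ≠ ⊥)
    (hlt : GrowthLE (idealCogrowth K (X : Set R) I) (algGrowth K (X : Set R))
      ∧ ¬ GrowthLE (algGrowth K (X : Set R)) (idealCogrowth K (X : Set R) I)) :
    ∀ J : Submodule K R, IsRightIdeal K J → J ≠ ⊥ → I ⊓ J ≠ ⊥ :=
  essential_of_cogrowth_lt_general X hgen I hI hlt
end
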